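/- There exists s ∈ Σ_m that is simultaneously an unpredictable point of the shift and has dense orbit: there are strictly increasing sequences of natural numbers (κ_n), (ζ_n) with d(σ^{κ_n} s, s) → 0 and d(σ^{κ_n + ζ_n} s, σ^{ζ_n} s) ≥ 1 for every n, and moreover the closure of the orbit {σ^k s : k ∈ ℕ} in (Σ_m, d) is all of Σ_m. -/
import Mathlib


/-- The one-sided shift map on `Σ_m = {0,…,m−1}^ℕ`. -/
def shift {m : ℕ} (s : ℕ → Fin m) : ℕ → Fin m := fun k => s (k + 1)

/-- The metric `d(s,t) = Σ_{k=0}^∞ |s_k − t_k| / 2^k` on `Σ_m`. -/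
noncomputable def dS {m : ℕ} (s t : ℕ → Fin m) : ℝ :=
  ∑' k : ℕ, |((s k : ℕ) : ℝ) - ((t k : ℕ) : ℝ)| / 2 ^ k

namespace ShiftProofAux

variable {m : ℕ}

lemma shift_iter (s : ℕ → Fin m) : ∀ k j, shift^[k] s j = s (j + k) := by
  intro k
  induction k generalizing s with
  | zero => intro j; simp
  | succ k ih =>
      intro j
      rw [Function.iterate_succ_apply, ih (shift s) j]
      simp [shift, Nat.add_assoc]

lemma term_le (s t : ℕ → Fin m) (k : ℕ) :
    |((s k : ℕ) : ℝ) - ((t k : ℕ) : ℝ)| / 2 ^ k ≤ (m : ℝ) * (1/2) ^ k := by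
  rw [div_le_iff₀ (by positivity)]
  have h1 : ((s k : ℕ) : ℝ) < m := by exact_mod_cast (s k).isLt
  have h2 : ((t k : ℕ) : ℝ) < m := by exact_mod_cast (t k).isLt
  have h3 : (0:ℝ) ≤ ((s k : ℕ) : ℝ) := Nat.cast_nonneg _
  have h4 : (0:ℝ) ≤ ((t k : ℕ) : ℝ) := Nat.cast_nonneg _
  have habs : |((s k : ℕ) : ℝ) - ((t k : ℕ) : ℝ)| ≤ m :=
    abs_sub_le_iff.mpr ⟨by linarith, by linarith⟩
  have hpow : ((1:ℝ)/2) ^ k * 2 ^ k = 1 := by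
    rw [← mul_pow]; norm_num
  calc |((s k : ℕ) : ℝ) - ((t k : ℕ) : ℝ)| ≤ (m:ℝ) := habs
    _ = (m:ℝ) * ((1/2) ^ k * 2 ^ k) := by rw [hpow, mul_one]
    _ = (m:ℝ) * (1/2) ^ k * 2 ^ k := by ring

lemma summable_dS (s t : ℕ → Fin m) :
    Summable (fun k : ℕ => |((s k : ℕ) : ℝ) - ((t k : ℕ) : ℝ)| / 2 ^ k) :=
  Summable.of_nonneg_of_le (fun k => by positivity) (term_le s t)
    ((summable_geometric_of_lt_one (by norm_num) (by norm_num)).mul_left _)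

lemma dS_nonneg (s t : ℕ → Fin m) : 0 ≤ dS s t :=
  tsum_nonneg (fun k => by positivity)

lemma tail_summable (s t : ℕ → Fin m) (N : ℕ) :
    Summable (fun i : ℕ =>
      |((s (i+N) : ℕ) : ℝ) - ((t (i+N) : ℕ) : ℝ)| / 2 ^ (i+N)) := by
  have hs1 := (summable_nat_add_iff (f := fun k : ℕ =>
      |((s k : ℕ) : ℝ) - ((t k : ℕ) : ℝ)| / 2 ^ k) N).mpr (summable_dS s t)
  simpa using hs1

lemma dS_le_of_agree (s t : ℕ → Fin m) (N : ℕ) (h : ∀ k < N, s k = t k) :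
    dS s t ≤ (m : ℝ) * 2 * (1/2) ^ N := by
  have hf := summable_dS s t
  have hzero : ∑ i ∈ Finset.range N,
      |((s i : ℕ) : ℝ) - ((t i : ℕ) : ℝ)| / 2 ^ i = 0 := by
    apply Finset.sum_eq_zero
    intro i hi
    rw [h i (Finset.mem_range.mp hi)]
    simp
  have h1 : dS s t
      = ∑' i : ℕ, |((s (i+N) : ℕ) : ℝ) - ((t (i+N) : ℕ) : ℝ)| / 2 ^ (i+N) := by
    have h1' := (Summable.sum_add_tsum_nat_add (f := fun k : ℕ =>
      |((s k : ℕ) : ℝ) - ((t k : ℕ) : ℝ)| / 2 ^ k) N hf).symm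
    rw [dS]
    simpa [hzero] using h1'
  have hsum2 : Summable (fun i : ℕ => ((m:ℝ) * (1/2) ^ N) * (1/2) ^ i) :=
    (summable_geometric_of_lt_one (by norm_num) (by norm_num)).mul_left _
  have hle : (∑' i : ℕ, |((s (i+N) : ℕ) : ℝ) - ((t (i+N) : ℕ) : ℝ)| / 2 ^ (i+N))
      ≤ ∑' i : ℕ, ((m:ℝ) * (1/2) ^ N) * (1/2) ^ i := by
    refine Summable.tsum_le_tsum (fun i => ?_) (tail_summable s t N) hsum2
    refine (term_le s t (i + N)).trans (le_of_eq ?_)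
    rw [pow_add]; ring
  have hgeom : (∑' i : ℕ, ((m:ℝ) * (1/2) ^ N) * (1/2) ^ i)
      = (m : ℝ) * 2 * (1/2) ^ N := by
    rw [tsum_mul_left, tsum_geometric_of_lt_one (by norm_num) (by norm_num)]
    norm_num; ring
  rw [h1]
  exact hle.trans (le_of_eq hgeom)

lemma one_le_dS (s t : ℕ → Fin m) (h : 1 ≤ |((s 0 : ℕ) : ℝ) - ((t 0 : ℕ) : ℝ)|) :
    1 ≤ dS s t := by
  have := Summable.le_tsum (summable_dS s t) 0 (fun j _ => by positivity)
  simp only [pow_zero, div_one] at this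
  exact le_trans h this

/-- The block construction: `L (n+1) = L n ++ (L n ++ [1] ++ w n)`. -/
def LL (hm : 2 ≤ m) (w : ℕ → List (Fin m)) : ℕ → List (Fin m)
  | 0 => [⟨0, by omega⟩]
  | n + 1 => LL hm w n ++ (LL hm w n ++ [⟨1, by omega⟩] ++ w n)

lemma LL_succ (hm : 2 ≤ m) (w : ℕ → List (Fin m)) (n : ℕ) :
    LL hm w (n + 1) = LL hm w n ++ (LL hm w n ++ [⟨1, by omega⟩] ++ w n) := rfl

lemma LL_len_succ (hm : 2 ≤ m) (w : ℕ → List (Fin m)) (n : ℕ) :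
    (LL hm w (n+1)).length = (LL hm w n).length + ((LL hm w n).length + 1 + (w n).length) := by
  rw [LL_succ]
  simp [List.length_append]
  omega

lemma LL_len_lt (hm : 2 ≤ m) (w : ℕ → List (Fin m)) (n : ℕ) :
    n < (LL hm w n).length := by
  induction n with
  | zero => simp [LL]
  | succ n ih => rw [LL_len_succ]; omega

lemma LL_prefix (hm : 2 ≤ m) (w : ℕ → List (Fin m)) (n : ℕ) :
    LL hm w n <+: LL hm w (n + 1) :=
  ⟨_, rfl⟩

lemma LL_prefix_le (hm : 2 ≤ m) (w : ℕ → List (Fin m)) {n N : ℕ} (h : n ≤ N) :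
    LL hm w n <+: LL hm w N := by
  induction N with
  | zero => rw [Nat.le_zero.mp h]
  | succ N ih =>
      rcases le_or_gt n N with h' | h'
      · exact (ih h').trans (LL_prefix hm w N)
      · have : n = N + 1 := by omega
        rw [this]

lemma getD_prefix {α : Type*} {l₁ l₂ : List α} (h : l₁ <+: l₂) (d : α) {k : ℕ}
    (hk : k < l₁.length) : l₂.getD k d = l₁.getD k d := by
  rw [List.getD_eq_getElem _ _ hk, List.getD_eq_getElem _ _ (lt_of_lt_of_le hk h.length_le),
    h.getElem hk]

/-- The point with dense orbit and unpredictability. -/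
def sf (hm : 2 ≤ m) (w : ℕ → List (Fin m)) : ℕ → Fin m :=
  fun k => (LL hm w (k + 1)).getD k ⟨0, by omega⟩

lemma sf_eq (hm : 2 ≤ m) (w : ℕ → List (Fin m)) {n k : ℕ}
    (hk : k < (LL hm w n).length) :
    sf hm w k = (LL hm w n).getD k ⟨0, by omega⟩ := by
  rw [sf]
  rcases le_or_gt (k + 1) n with h | h
  · exact (getD_prefix (LL_prefix_le hm w h) _
      (Nat.lt_of_succ_lt (LL_len_lt hm w (k+1)))).symm
  · exact getD_prefix (LL_prefix_le hm w (by omega : n ≤ k + 1)) _ hk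

lemma sf_block (hm : 2 ≤ m) (w : ℕ → List (Fin m)) {n j : ℕ}
    (hj : j < (LL hm w n).length) :
    sf hm w ((LL hm w n).length + j) = sf hm w j := by
  have hlen : (LL hm w n).length + j < (LL hm w (n+1)).length := by
    rw [LL_len_succ]; omega
  rw [sf_eq hm w hlen, sf_eq hm w hj, LL_succ,
    List.getD_append_right _ _ _ _ (by omega), Nat.add_sub_cancel_left,
    List.getD_append _ _ _ _ (by simp; omega),
    List.getD_append _ _ _ _ hj]

lemma sf_one (hm : 2 ≤ m) (w : ℕ → List (Fin m)) (n : ℕ) :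
    sf hm w ((LL hm w n).length + (LL hm w n).length) = ⟨1, by omega⟩ := by
  have hlen : (LL hm w n).length + (LL hm w n).length < (LL hm w (n+1)).length := by
    rw [LL_len_succ]; omega
  rw [sf_eq hm w hlen, LL_succ,
    List.getD_append_right _ _ _ _ (by omega), Nat.add_sub_cancel_left,
    List.getD_append _ _ _ _ (by simp),
    List.getD_append_right _ _ _ _ (by omega)]
  simp

lemma sf_zero (hm : 2 ≤ m) (w : ℕ → List (Fin m)) :
    sf hm w 0 = ⟨0, by omega⟩ := by
  rw [sf_eq hm w (n := 0) (by simp [LL])]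
  simp [LL]

lemma sf_word (hm : 2 ≤ m) (w : ℕ → List (Fin m)) {n j : ℕ}
    (hj : j < (w n).length) :
    sf hm w ((LL hm w n).length + (LL hm w n).length + 1 + j)
      = (w n).getD j ⟨0, by omega⟩ := by
  have hlen : (LL hm w n).length + (LL hm w n).length + 1 + j
      < (LL hm w (n+1)).length := by
    rw [LL_len_succ]; omega
  rw [sf_eq hm w hlen, LL_succ,
    List.getD_append_right _ _ _ _ (by omega),
    List.getD_append_right _ _ _ _ (by simp; omega)]
  congr 1
  simp
  omega

end ShiftProofAux

open ShiftProofAux in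
/-- the shift on `(Σ_m, d)` has a point that is simultaneously unpredictable and
has a dense orbit (the closure of its orbit, with respect to `d`, is all of `Σ_m`). -/
theorem shift_unpredictable_point_with_dense_orbit (m : ℕ) (hm : 2 ≤ m) :
    ∃ s : ℕ → Fin m,
      (∃ κ ζ : ℕ → ℕ,
        StrictMono κ ∧ StrictMono ζ ∧
        Filter.Tendsto (fun n : ℕ => dS (shift^[κ n] s) s) Filter.atTop (nhds 0) ∧
        ∀ n : ℕ, 1 ≤ dS (shift^[κ n + ζ n] s) (shift^[ζ n] s)) ∧
      (∀ t : ℕ → Fin m, ∀ ε > (0 : ℝ), ∃ k : ℕ, dS (shift^[k] s) t < ε) := by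
  obtain ⟨w, hw⟩ := exists_surjective_nat (List (Fin m))
  have hnl : ∀ n, n < (LL hm w n).length := fun n => LL_len_lt hm w n
  have hlsm : StrictMono (fun n => (LL hm w n).length) := by
    apply strictMono_nat_of_lt_succ
    intro n
    rw [LL_len_succ]
    omega
  refine ⟨sf hm w, ⟨fun n => (LL hm w n).length, fun n => (LL hm w n).length,
    hlsm, hlsm, ?_, ?_⟩, ?_⟩
  · -- Tendsto
    have hb : ∀ n, dS (shift^[(LL hm w n).length] (sf hm w)) (sf hm w)
        ≤ (m:ℝ) * 2 * (1/2) ^ n := by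
      intro n
      apply dS_le_of_agree
      intro k hk
      rw [shift_iter, Nat.add_comm]
      exact sf_block hm w (by have := hnl n; omega)
    have hg : Filter.Tendsto (fun n : ℕ => (m:ℝ) * 2 * (1/2) ^ n)
        Filter.atTop (nhds 0) := by
      have := (tendsto_pow_atTop_nhds_zero_of_lt_one (r := (1:ℝ)/2)
        (by norm_num) (by norm_num)).const_mul ((m:ℝ) * 2)
      simpa using this
    exact squeeze_zero (fun n => dS_nonneg _ _) hb hg
  · -- unpredictability
    intro n
    apply one_le_dS
    rw [shift_iter, shift_iter, Nat.zero_add, Nat.zero_add]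
    have h1 : sf hm w ((LL hm w n).length + (LL hm w n).length) = ⟨1, by omega⟩ :=
      sf_one hm w n
    have h0 : sf hm w ((LL hm w n).length) = ⟨0, by omega⟩ := by
      have h := sf_block hm w (n := n) (j := 0) (by have := hnl n; omega)
      rw [Nat.add_zero] at h
      rw [h, sf_zero]
    rw [h1, h0]
    norm_num
  · -- dense orbit
    intro t ε hε
    have hm0 : (0:ℝ) < (m:ℝ) * 2 := by positivity
    obtain ⟨N, hN⟩ := exists_pow_lt_of_lt_one (div_pos hε hm0)
      (by norm_num : (1:ℝ)/2 < 1)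
    obtain ⟨n, hn⟩ := hw (List.ofFn (fun i : Fin N => t i))
    refine ⟨(LL hm w n).length + (LL hm w n).length + 1,
      lt_of_le_of_lt (dS_le_of_agree _ _ N ?_) ?_⟩
    · intro k hk
      rw [shift_iter, Nat.add_comm]
      have hklen : k < (w n).length := by rw [hn]; simpa using hk
      rw [sf_word hm w hklen, hn, List.getD_eq_getElem _ _ (by simpa using hk)]
      simp
    · rw [lt_div_iff₀' hm0] at hN
      exact hN
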